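/- Let k be a field, A a finite-dimensional associative k-algebra, (V,ℓ,r) a finite-dimensional A-bimodule, α, β : V → A linear maps, and κ ∈ k. Let Â = A⋉V* be the semidirect-product algebra on A⊕V* with product (x₁,u₁*)·(x₂,u₂*) = (x₁·x₂, r*(x₁)u₂* + u₁* ℓ*(x₂)), identify Â* with A*⊕V via ⟨(a*,v),(x,u*)⟩ = a*(x) + u*(v), and define α̃₋, β̃₊ : Â* → Â by α̃₋(a*,v) = (−α(v), αᵗ(a*)) and β̃₊(a*,v) = (β(v), βᵗ(a*)), where αᵗ, βᵗ : A* → V* are the transposes. Then (α,β) is an extended O-operator with modification β of mass κ on (V,ℓ,r) — i.e. β is a balanced A-bimodule homomorphism (ℓ(β(u))v = u r(β(v)), β(ℓ(x)u) = x·β(u), β(u r(x)) = β(u)·x) and α(u)·α(v) − α(ℓ(α(u))v + u r(α(v))) = κ β(u)·β(v) for all u, v ∈ V — if and only if (α̃₋,β̃₊) is an extended O-operator with modification β̃₊ of mass κ on the dual bimodule (Â*,R_Â*,L_Â*) — i.e. β̃₊ is a balanced Â-bimodule homomorphism and α̃₋(ξ)·α̃₋(η) − α̃₋(R_Â*(α̃₋(ξ))η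 + ξ L_Â*(α̃₋(η))) = κ β̃₊(ξ)·β̃₊(η) for all ξ, η ∈ Â*, where (R_Â*(z)ξ)(w) = ξ(w·z) and (ξ L_Â*(z))(w) = ξ(z·w) for z, w ∈ Â, ξ ∈ Â*. -/

import Mathlib

/-!
Everything is checked componentwise on `Â = A ⊕ V*` and `Â* = A* ⊕ V`. The `A`-components of the
conditions on `(α̃₋, β̃₊)` are the conditions on `(α, β)` themselves, while the `V*`- and
`A*`-components are those same conditions paired with a functional (using that `β` is an
`A`-bimodule homomorphism). Conversely, evaluating on elements `(0, v)` and `(x, 0)` recovers the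
conditions on `(α, β)`, since functionals separate the points of a vector space.
-/

section

variable {k A V : Type} [Field k]
  [NonUnitalRing A] [Module k A] [SMulCommClass k A A] [IsScalarTower k A A]
  [AddCommGroup V] [Module k V]

/-- The multiplication of the semidirect product `Â = A ⋉ V*`:
`(x₁,u₁*)·(x₂,u₂*) = (x₁x₂, r*(x₁)u₂* + u₁*ℓ*(x₂))`, where `(r*(x)u*)(v) = u*(v r(x))`
and `(u*ℓ*(x))(v) = u*(ℓ(x)v)`. Here `ℓ x v` denotes `ℓ(x)v` and `r x v` denotes `v r(x)`. -/
def hatMul (ℓ r : A →ₗ[k] V →ₗ[k] V) (p q : A × Module.Dual k V) : A × Module.Dual k V :=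
  (p.1 * q.1, q.2 ∘ₗ r p.1 + p.2 ∘ₗ ℓ q.1)

/-- The action `R_Â*(z)ξ` of `z ∈ Â` on `ξ ∈ Â* = A* ⊕ V`, characterized by
`(R_Â*(z)ξ)(w) = ξ(w·z)` under the pairing `⟨(a*,v),(x,u*)⟩ = a*(x) + u*(v)`. -/
def Rhat (ℓ r : A →ₗ[k] V →ₗ[k] V) (z : A × Module.Dual k V) (ξ : Module.Dual k A × V) :
    Module.Dual k A × V :=
  (ξ.1 ∘ₗ LinearMap.mulRight k z.1 + z.2 ∘ₗ r.flip ξ.2, ℓ z.1 ξ.2)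

/-- The action `ξ L_Â*(z)` of `z ∈ Â` on `ξ ∈ Â* = A* ⊕ V`, characterized by
`(ξ L_Â*(z))(w) = ξ(z·w)` under the pairing `⟨(a*,v),(x,u*)⟩ = a*(x) + u*(v)`. -/
def Lhat (ℓ r : A →ₗ[k] V →ₗ[k] V) (ξ : Module.Dual k A × V) (z : A × Module.Dual k V) :
    Module.Dual k A × V :=
  (ξ.1 ∘ₗ LinearMap.mulLeft k z.1 + z.2 ∘ₗ ℓ.flip ξ.2, r z.1 ξ.2)

/-- `β̃₊ : Â* → Â`, `β̃₊(a*, v) = (β(v), βᵗ(a*))`. -/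
def bplus (β : V →ₗ[k] A) (ξ : Module.Dual k A × V) : A × Module.Dual k V :=
  (β ξ.2, ξ.1 ∘ₗ β)

/-- `α̃₋ : Â* → Â`, `α̃₋(a*, v) = (−α(v), αᵗ(a*))`. -/
def aminus (α : V →ₗ[k] A) (ξ : Module.Dual k A × V) : A × Module.Dual k V :=
  (-(α ξ.2), ξ.1 ∘ₗ α)

/-- `right x w` stands for the right action `w r(x)`. -/
def IsBalancedBimoduleHom {B W : Type*} (mul : B → B → B) (left right : B → W → W)
    (δ : W → B) : Prop :=
  (∀ u v, left (δ u) v = right (δ v) u) ∧ (∀ x u, δ (left x u) = mul x (δ u)) ∧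
    ∀ x u, δ (right x u) = mul (δ u) x

def ExtendedOEquation {k B W : Type*} [SMul k B] [Sub B] [Add W] (mul : B → B → B)
    (left right : B → W → W) (γ δ : W → B) (κ : k) : Prop :=
  ∀ u v, mul (γ u) (γ v) - γ (left (γ u) v + right (γ v) u) = κ • mul (δ u) (δ v)

def IsExtendedOOperator {k B W : Type*} [SMul k B] [Sub B] [Add W] (mul : B → B → B)
    (left right : B → W → W) (γ δ : W → B) (κ : k) : Prop :=
  IsBalancedBimoduleHom mul left right δ ∧ ExtendedOEquation mul left right γ δ κ

theorem isBalancedBimoduleHom_bplus_iff (ℓ r : A →ₗ[k] V →ₗ[k] V) (β : V →ₗ[k] A) :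
    IsBalancedBimoduleHom (· * ·) (ℓ · ·) (r · ·) β ↔
      IsBalancedBimoduleHom (hatMul ℓ r) (Rhat ℓ r) (fun z ξ ↦ Lhat ℓ r ξ z) (bplus β) := by
  constructor
  · rintro ⟨hbal, hleft, hright⟩
    refine ⟨fun ξ η ↦ Prod.ext ?_ ?_, fun z ξ ↦ Prod.ext ?_ ?_, fun z ξ ↦ Prod.ext ?_ ?_⟩
    · ext x
      simp [Rhat, Lhat, bplus, hleft, hright, add_comm]
    · exact hbal ξ.2 η.2
    · exact hleft z.1 ξ.2
    · ext v
      simp [Rhat, hatMul, bplus, hright, hbal ξ.2 v]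
    · exact hright z.1 ξ.2
    · ext v
      simp [Lhat, hatMul, bplus, hleft, hbal v ξ.2, add_comm]
  · rintro ⟨hbal, hleft, hright⟩
    refine ⟨fun u v ↦ ?_, fun x u ↦ ?_, fun x u ↦ ?_⟩
    · refine Module.eval_apply_injective k (LinearMap.ext fun g ↦ ?_)
      simpa [Rhat, hatMul, bplus] using
        (LinearMap.congr_fun (congrArg Prod.snd (hleft (0, g) (0, u))) v).symm
    · simpa [Rhat, hatMul, bplus] using congrArg Prod.fst (hleft (x, 0) (0, u))
    · simpa [Lhat, hatMul, bplus] using congrArg Prod.fst (hright (x, 0) (0, u))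

theorem extendedOEquation_aminus_bplus_iff {ℓ r : A →ₗ[k] V →ₗ[k] V} {β : V →ₗ[k] A}
    (hleft : ∀ x u, β (ℓ x u) = x * β u) (hright : ∀ x u, β (r x u) = β u * x)
    (α : V →ₗ[k] A) (κ : k) :
    ExtendedOEquation (· * ·) (ℓ · ·) (r · ·) α β κ ↔
      ExtendedOEquation (hatMul ℓ r) (Rhat ℓ r) (fun z ξ ↦ Lhat ℓ r ξ z) (aminus α) (bplus β)
        κ := by
  constructor
  · intro hO ξ η
    refine Prod.ext ?_ ?_
    · simpa [hatMul, aminus, Rhat, Lhat, bplus, sub_eq_add_neg, add_comm] using hO ξ.2 η.2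
    · ext v
      have hξ := congrArg ξ.1 (hO η.2 v)
      have hη := congrArg η.1 (hO v ξ.2)
      simp only [map_sub, map_add, map_smul, smul_eq_mul] at hξ hη
      simp only [hatMul, aminus, Rhat, Lhat, bplus, mul_neg, neg_mul, neg_neg, map_neg, map_add,
        neg_add_rev, LinearMap.comp_neg, LinearMap.neg_apply, Prod.mk_add_mk, Prod.mk_sub_mk,
        LinearMap.sub_apply, LinearMap.add_apply, LinearMap.coe_comp, Function.comp_apply,
        LinearMap.mulRight_apply, LinearMap.flip_apply, LinearMap.mulLeft_apply, Prod.smul_mk,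
        smul_add, LinearMap.smul_apply, smul_eq_mul, hleft, hright]
      linear_combination hξ + hη
  · intro hO u v
    simpa [hatMul, aminus, Rhat, Lhat, bplus, sub_eq_add_neg, add_comm] using
      congrArg Prod.fst (hO (0, u) (0, v))

theorem stmt17_general
    (ℓ r : A →ₗ[k] V →ₗ[k] V)
    (α β : V →ₗ[k] A) (κ : k) :
    -- (α, β) is an extended O-operator with modification β of mass κ
    (((∀ u v : V, ℓ (β u) v = r (β v) u) ∧
      (∀ (x : A) (u : V), β (ℓ x u) = x * β u) ∧
      (∀ (x : A) (u : V), β (r x u) = β u * x)) ∧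
     (∀ u v : V,
        α u * α v - α (ℓ (α u) v + r (α v) u) = κ • (β u * β v))) ↔
    -- (α̃₋, β̃₊) is an extended O-operator with modification β̃₊ of mass κ on (Â*, R_Â*, L_Â*)
    (((∀ ξ η : Module.Dual k A × V,
         Rhat ℓ r (bplus β ξ) η = Lhat ℓ r ξ (bplus β η)) ∧
      (∀ (z : A × Module.Dual k V) (ξ : Module.Dual k A × V),
         bplus β (Rhat ℓ r z ξ) = hatMul ℓ r z (bplus β ξ)) ∧
      (∀ (z : A × Module.Dual k V) (ξ : Module.Dual k A × V),
         bplus β (Lhat ℓ r ξ z) = hatMul ℓ r (bplus β ξ) z)) ∧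
     (∀ ξ η : Module.Dual k A × V,
        hatMul ℓ r (aminus α ξ) (aminus α η) -
            aminus α (Rhat ℓ r (aminus α ξ) η + Lhat ℓ r ξ (aminus α η)) =
          κ • hatMul ℓ r (bplus β ξ) (bplus β η))) := by
  change IsExtendedOOperator (· * ·) (ℓ · ·) (r · ·) α β κ ↔
    IsExtendedOOperator (hatMul ℓ r) (Rhat ℓ r) (fun z ξ ↦ Lhat ℓ r ξ z) (aminus α) (bplus β) κ
  rw [IsExtendedOOperator, IsExtendedOOperator, ← isBalancedBimoduleHom_bplus_iff]
  exact and_congr_right fun ⟨_, hleft, hright⟩ ↦ extendedOEquation_aminus_bplus_iff hleft hright α κ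

/-- Theorem 3.16: `(α, β)` is an extended O-operator with modification
`β` of mass `κ` on `(V, ℓ, r)` iff `(α̃₋, β̃₊)` is an extended O-operator with
modification `β̃₊` of mass `κ` on the dual bimodule `(Â*, R_Â*, L_Â*)`. -/
theorem stmt17 [FiniteDimensional k A] [FiniteDimensional k V]
    (ℓ r : A →ₗ[k] V →ₗ[k] V)
    (hbim1 : ∀ (x y : A) (v : V), ℓ (x * y) v = ℓ x (ℓ y v))
    (hbim2 : ∀ (x y : A) (v : V), r y (r x v) = r (x * y) v)
    (hbim3 : ∀ (x y : A) (v : V), r y (ℓ x v) = ℓ x (r y v))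
    (α β : V →ₗ[k] A) (κ : k) :
    -- (α, β) is an extended O-operator with modification β of mass κ
    (((∀ u v : V, ℓ (β u) v = r (β v) u) ∧
      (∀ (x : A) (u : V), β (ℓ x u) = x * β u) ∧
      (∀ (x : A) (u : V), β (r x u) = β u * x)) ∧
     (∀ u v : V,
        α u * α v - α (ℓ (α u) v + r (α v) u) = κ • (β u * β v))) ↔
    -- (α̃₋, β̃₊) is an extended O-operator with modification β̃₊ of mass κ on (Â*, R_Â*, L_Â*)
    (((∀ ξ η : Module.Dual k A × V,
         Rhat ℓ r (bplus β ξ) η = Lhat ℓ r ξ (bplus β η)) ∧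
      (∀ (z : A × Module.Dual k V) (ξ : Module.Dual k A × V),
         bplus β (Rhat ℓ r z ξ) = hatMul ℓ r z (bplus β ξ)) ∧
      (∀ (z : A × Module.Dual k V) (ξ : Module.Dual k A × V),
         bplus β (Lhat ℓ r ξ z) = hatMul ℓ r (bplus β ξ) z)) ∧
     (∀ ξ η : Module.Dual k A × V,
        hatMul ℓ r (aminus α ξ) (aminus α η) -
            aminus α (Rhat ℓ r (aminus α ξ) η + Lhat ℓ r ξ (aminus α η)) =
          κ • hatMul ℓ r (bplus β ξ) (bplus β η))) :=
  stmt17_general ℓ r α β κ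

end
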